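/- arXiv:1812.01971 — 2 statements merged into one kernel-verified Lean document; each statement's English description precedes it below -/
import Mathlib

section
/- Let R be a unital ring and a ∈ R a regular element. Then the Jacobson radical of the ring aRa equals {x ∈ aRa : axa ∈ J(R)}. -/
/-!
For a non-unital subring `A` of `R` with `u * c * u ∈ A` whenever `u ∈ A`, an element `x ∈ A` lies
in the Jacobson radical of `A` exactly when `1 - x * r` is a unit of `R` for all `r ∈ A`. Indeed, a
right quasi-inverse `y ∈ A` of `x * r` gives a right inverse `1 - y = 1 - x * (r * y - r)` of
`1 - x * r` of the same shape, so all these right inverses are two-sided; conversely, if `c` is the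
inverse of `1 - u` with `u ∈ A`, then `1 - c = -u - u * c * u` is a quasi-inverse lying in `A`.
For `A = aRa`, Jacobson's lemma turns the units `1 - x * (a * s * a)` into the units
`1 - (a * x * a) * s`, which characterise `a * x * a ∈ J(R)`.
-/

/-- The Jacobson radical of the (possibly non-unital) ring given by a subset `A` of `R`
closed under the operations of `R`: the set of `x ∈ A` such that `x*r` is right
quasi-regular in `A` for every `r ∈ A`. -/
def jacobsonOfSubset {R : Type*} [Ring R] (A : Set R) : Set R :=
  {x ∈ A | ∀ r ∈ A, ∃ y ∈ A, x * r + y - x * r * y = 0}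

section Monoid

variable {M : Type*} [Monoid M] {T : Set M} {p : M}

theorem isUnit_of_forall_exists_mul_eq_one (hT : ∀ p ∈ T, ∃ q ∈ T, p * q = 1) (hp : p ∈ T) :
    IsUnit p := by
  obtain ⟨q, hq, hpq⟩ := hT p hp
  obtain ⟨q', -, hqq'⟩ := hT q hq
  have hqp : q * p = 1 := left_inv_eq_right_inv hpq hqq' ▸ hqq'
  exact isUnit_iff_exists.2 ⟨q, hpq, hqp⟩

theorem isUnit_of_forall_exists_mul_eq_one' (hT : ∀ p ∈ T, ∃ q ∈ T, q * p = 1) (hp : p ∈ T) :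
    IsUnit p := by
  obtain ⟨q, hq, hqp⟩ := hT p hp
  obtain ⟨q', -, hq'q⟩ := hT q hq
  have hpq : p * q = 1 := (left_inv_eq_right_inv hq'q hqp).symm ▸ hq'q
  exact isUnit_iff_exists.2 ⟨q, hpq, hqp⟩

end Monoid

section Ring

variable {R : Type*} [Ring R]

theorem isUnit_one_sub_mul_comm {x y : R} : IsUnit (1 - x * y) ↔ IsUnit (1 - y * x) := by
  have h := spectrum.unit_mem_mul_comm (R := ℤ) (a := x) (b := y) (r := 1)
  rwa [spectrum.mem_iff, spectrum.mem_iff, not_iff_not, Units.val_one, map_one] at h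

theorem Ideal.mem_jacobson_bot_iff_forall_isUnit_one_sub_mul {x : R} :
    x ∈ Ideal.jacobson (⊥ : Ideal R) ↔ ∀ y, IsUnit (1 - x * y) := by
  simp only [isUnit_one_sub_mul_comm (x := x), Ideal.mem_jacobson_iff, Ideal.mem_bot]
  constructor
  · intro hx y
    refine isUnit_of_forall_exists_mul_eq_one' (T := Set.range (1 - · * x)) ?_ ⟨y, rfl⟩
    rintro _ ⟨y, rfl⟩
    obtain ⟨z, hz⟩ := hx (-y)
    refine ⟨z, ⟨-(z * y), ?_⟩, ?_⟩
    · linear_combination (norm := noncomm_ring) -hz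
    · linear_combination (norm := noncomm_ring) hz
  · intro hx y
    obtain ⟨z, -, hz⟩ := isUnit_iff_exists.1 (hx (-y))
    exact ⟨z, by linear_combination (norm := noncomm_ring) hz⟩

section NonUnitalSubring

variable (A : NonUnitalSubring R)

theorem isUnit_one_sub_mul_of_mem_jacobsonOfSubset {x r : R}
    (hx : x ∈ jacobsonOfSubset (A : Set R)) (hr : r ∈ A) : IsUnit (1 - x * r) := by
  refine isUnit_of_forall_exists_mul_eq_one (T := (1 - x * ·) '' A) ?_ ⟨r, hr, rfl⟩
  rintro _ ⟨r, hr, rfl⟩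
  obtain ⟨y, hy, hxy⟩ := hx.2 r hr
  refine ⟨1 - y, ⟨r * y - r, A.sub_mem (A.mul_mem hr hy) hr, ?_⟩, ?_⟩
  · linear_combination (norm := noncomm_ring) hxy
  · linear_combination (norm := noncomm_ring) -hxy

theorem exists_mem_quasiInverse_of_isUnit_one_sub (hA : ∀ u ∈ A, ∀ c, u * c * u ∈ A) {u : R}
    (hu : u ∈ A) (h : IsUnit (1 - u)) : ∃ y ∈ A, u + y - u * y = 0 := by
  obtain ⟨c, hc, -⟩ := isUnit_iff_exists.1 h
  refine ⟨-u - u * c * u, A.sub_mem (A.neg_mem hu) (hA u hu c), ?_⟩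
  linear_combination (norm := noncomm_ring) -u * hc * u

theorem jacobsonOfSubset_eq (hA : ∀ u ∈ A, ∀ c, u * c * u ∈ A) :
    jacobsonOfSubset (A : Set R) = {x ∈ A | ∀ r ∈ A, IsUnit (1 - x * r)} := by
  ext x
  refine ⟨fun hx ↦ ⟨hx.1, fun r hr ↦ isUnit_one_sub_mul_of_mem_jacobsonOfSubset A hx hr⟩, ?_⟩
  rintro ⟨hxA, hx⟩
  exact ⟨hxA, fun r hr ↦
    exists_mem_quasiInverse_of_isUnit_one_sub A hA (A.mul_mem hxA hr) (hx r hr)⟩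

end NonUnitalSubring

def sandwichSubring (a : R) : NonUnitalSubring R where
  carrier := {x | ∃ r, x = a * r * a}
  zero_mem' := ⟨0, by simp⟩
  add_mem' := by
    rintro _ _ ⟨r, rfl⟩ ⟨s, rfl⟩
    exact ⟨r + s, by noncomm_ring⟩
  neg_mem' := by
    rintro _ ⟨r, rfl⟩
    exact ⟨-r, by noncomm_ring⟩
  mul_mem' := by
    rintro _ _ ⟨r, rfl⟩ ⟨s, rfl⟩
    exact ⟨r * a * a * s, by noncomm_ring⟩

theorem mem_sandwichSubring {a x : R} : x ∈ sandwichSubring a ↔ ∃ r, x = a * r * a := Iff.rfl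

theorem mul_mul_mem_sandwichSubring {a u : R} (hu : u ∈ sandwichSubring a) (c : R) :
    u * c * u ∈ sandwichSubring a := by
  obtain ⟨r, rfl⟩ := hu
  exact ⟨r * a * c * a * r, by noncomm_ring⟩

theorem forall_isUnit_one_sub_mul_sandwichSubring_iff {a x : R} :
    (∀ r ∈ sandwichSubring a, IsUnit (1 - x * r)) ↔ a * x * a ∈ Ideal.jacobson (⊥ : Ideal R) := by
  simp only [Ideal.mem_jacobson_bot_iff_forall_isUnit_one_sub_mul, mem_sandwichSubring,
    forall_exists_index]
  rw [forall_comm]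
  simp only [forall_eq]
  refine forall_congr' fun s ↦ ?_
  rw [show x * (a * s * a) = x * a * s * a by noncomm_ring,
    show a * x * a * s = a * (x * a * s) by noncomm_ring, isUnit_one_sub_mul_comm]

end Ring

theorem jacobson_aRa_general {R : Type*} [Ring R] (a : R) :
    jacobsonOfSubset {x : R | ∃ r : R, x = a * r * a} =
      {x : R | (∃ r : R, x = a * r * a) ∧ a * x * a ∈ Ideal.jacobson (⊥ : Ideal R)} := by
  change jacobsonOfSubset (sandwichSubring a : Set R) = _
  rw [jacobsonOfSubset_eq _ fun u hu ↦ mul_mul_mem_sandwichSubring hu]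
  simp only [forall_isUnit_one_sub_mul_sandwichSubring_iff]
  rfl

/-- For a regular element `a` of `R`, the Jacobson radical of the ring `aRa` equals
`{x ∈ aRa : a*x*a ∈ J(R)}`. -/
theorem jacobson_aRa {R : Type*} [Ring R] (a b : R) (hb : a * b * a = a) :
    jacobsonOfSubset {x : R | ∃ r : R, x = a * r * a} =
      {x : R | (∃ r : R, x = a * r * a) ∧ a * x * a ∈ Ideal.jacobson (⊥ : Ideal R)} :=
  jacobson_aRa_general a
end

section
/- Let R be a unital ring and a ∈ R such that a and a² are both regular, with a = aba and a²ca² = a². Set e = ab. Then eae = a²b is a regular element of the corner ring eRe, with inner inverse eace ∈ eRe (i.e., (a²b)(eace)(a²b) = a²b). -/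
/-!
From `a * b * a = a`, the element `e = a * b` is idempotent and `s = a² * b` satisfies
`e * s = s = s * e`, so `s ∈ eRe`. Sandwiching between such elements absorbs the outer `e`'s of
`e * x * e`, hence `s * (e * (a * c) * e) * s = s * (a * c) * s`, and this equals
`a² * c * a² * b = a² * b` because `a² * b * a = a²`.
-/

section Semigroup

variable {S : Type*} [Semigroup S]

theorem isIdempotentElem_mul_of_mul_mul_eq {a b : S} (hb : a * b * a = a) :
    IsIdempotentElem (a * b) := by
  rw [IsIdempotentElem, ← mul_assoc, hb]

theorem IsIdempotentElem.mul_mul_corner_mul {e : S} (he : IsIdempotentElem e) (x : S) :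
    e * (e * x * e) * e = e * x * e := by
  rw [← mul_assoc, ← mul_assoc, he.eq, he.mul_mul_self]

theorem mul_mul_corner_mul_eq_of_mem_corner {e s : S} (hse : s * e = s) (hes : e * s = s)
    (x : S) : s * (e * x * e) * s = s * x * s := by
  rw [← mul_assoc, ← mul_assoc, hse, mul_assoc _ e s, hes]

variable {a b : S}

theorem mul_mul_mul_eq_mul_mul_of_mul_mul_eq (hb : a * b * a = a) :
    a * b * a * (a * b) = a * a * b := by
  rw [hb, ← mul_assoc]

theorem mul_mul_mul_eq_self_of_mul_mul_eq (hb : a * b * a = a) :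
    a * a * b * a = a * a := by
  rw [mul_assoc a a b, mul_assoc a, hb]

theorem mul_mul_mul_mul_right_eq_of_mul_mul_eq (hb : a * b * a = a) :
    a * a * b * (a * b) = a * a * b := by
  rw [← mul_assoc, mul_mul_mul_eq_self_of_mul_mul_eq hb]

theorem mul_mul_mul_mul_left_eq_of_mul_mul_eq (hb : a * b * a = a) :
    a * b * (a * a * b) = a * a * b := by
  rw [← mul_assoc, ← mul_assoc, hb]

theorem sq_mul_regular_of_mul_mul_eq {c : S} (hb : a * b * a = a)
    (hc : a * a * c * (a * a) = a * a) :
    a * a * b * (a * c) * (a * a * b) = a * a * b := by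
  calc a * a * b * (a * c) * (a * a * b)
      = a * a * b * a * c * (a * a) * b := by simp only [mul_assoc]
    _ = a * a * b := by rw [mul_mul_mul_eq_self_of_mul_mul_eq hb, hc]

end Semigroup

/-- If `a = a*b*a` and `a² = a²*c*a²`, and `e = a*b`, then `e*a*e = a²*b` is a regular
element of the corner ring `eRe`, with inner inverse `e*a*c*e ∈ eRe`. -/
theorem corner_elt_regular {R : Type*} [Ring R] (a b c : R)
    (hb : a * b * a = a) (hc : a * a * c * (a * a) = a * a) :
    (a * b) * a * (a * b) = a * a * b ∧  -- eae = a²b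
    (a * b) * ((a * b) * (a * c) * (a * b)) * (a * b) =
      (a * b) * (a * c) * (a * b) ∧  -- eace ∈ eRe
    (a * a * b) * ((a * b) * (a * c) * (a * b)) * (a * a * b) = a * a * b := by
  have he := isIdempotentElem_mul_of_mul_mul_eq hb
  refine ⟨mul_mul_mul_eq_mul_mul_of_mul_mul_eq hb, he.mul_mul_corner_mul _, ?_⟩
  rw [mul_mul_corner_mul_eq_of_mem_corner (mul_mul_mul_mul_right_eq_of_mul_mul_eq hb)
    (mul_mul_mul_mul_left_eq_of_mul_mul_eq hb)]
  exact sq_mul_regular_of_mul_mul_eq hb hc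
end
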